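/- Let (Y,d) be a metric space and let k : Y × Y → ℝ be a positive, symmetric, bounded kernel such that the family {k(·,y) : y ∈ Y} is uniformly equicontinuous on Y. Let μ be a tight Borel probability measure on Y and let ε > 0. Then there exist m ∈ ℕ and points x_1,…,x_m ∈ Y such that the measure ν := (1/m)∑_{j=1}^m δ_{x_j} satisfies sup_{x∈Y} |U^ν(x) − U^μ(x)| ≤ ε. -/

import Mathlib

open MeasureTheory ENNReal
open scoped BigOperators

namespace Rendezvous

variable {X : Type*}

/-- The `n`-th Chebyshev constant `Mₙ(H,L)` of `L` with respect to `H` for the kernel `k`. -/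
noncomputable def chebMn (k : X → X → ℝ≥0∞) (n : ℕ) (H L : Set X) : ℝ≥0∞ :=
  ⨆ w : Fin n → H, ⨅ x : L, (∑ j, k (x : X) ((w j : X))) / (n : ℝ≥0∞)

/-- The `n`-th dual Chebyshev constant `M̄ₙ(H,L)`. -/
noncomputable def chebMnDual (k : X → X → ℝ≥0∞) (n : ℕ) (H L : Set X) : ℝ≥0∞ :=
  ⨅ w : Fin n → H, ⨆ x : L, (∑ j, k (x : X) ((w j : X))) / (n : ℝ≥0∞)

/-- The Chebyshev constant `M(H,L) = sup_{n ≥ 1} Mₙ(H,L)`. -/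
noncomputable def chebM (k : X → X → ℝ≥0∞) (H L : Set X) : ℝ≥0∞ :=
  ⨆ n : ℕ, ⨆ (_ : 1 ≤ n), chebMn k n H L

/-- The dual Chebyshev constant `M̄(H,L) = inf_{n ≥ 1} M̄ₙ(H,L)`. -/
noncomputable def chebMDual (k : X → X → ℝ≥0∞) (H L : Set X) : ℝ≥0∞ :=
  ⨅ n : ℕ, ⨅ (_ : 1 ≤ n), chebMnDual k n H L

/-- The potential `U^μ(x) = ∫ k(x,y) dμ(y)` of a measure. -/
noncomputable def pot [MeasurableSpace X] (k : X → X → ℝ≥0∞) (μ : Measure X) (x : X) : ℝ≥0∞ :=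
  ∫⁻ y, k x y ∂μ

/-- `μ` is a tight (inner regular w.r.t. compact sets) Borel probability measure
concentrated on `H`. -/
def TightProbOn [TopologicalSpace X] [MeasurableSpace X] (μ : Measure X) (H : Set X) : Prop :=
  IsProbabilityMeasure μ ∧ μ.InnerRegular ∧ μ Hᶜ = 0

/-- The quasi-uniform energy `q(H,L) = inf_{μ ∈ M₁(H)} sup_{x ∈ L} U^μ(x)`. -/
noncomputable def qUp [TopologicalSpace X] [MeasurableSpace X] (k : X → X → ℝ≥0∞)
    (H L : Set X) : ℝ≥0∞ :=
  ⨅ (μ : Measure X) (_ : TightProbOn μ H), ⨆ x : L, pot k μ (x : X)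

/-- The dual quasi-uniform energy `q̲(H,L) = sup_{μ ∈ M₁(H)} inf_{x ∈ L} U^μ(x)`. -/
noncomputable def qLow [TopologicalSpace X] [MeasurableSpace X] (k : X → X → ℝ≥0∞)
    (H L : Set X) : ℝ≥0∞ :=
  ⨆ (μ : Measure X) (_ : TightProbOn μ H), ⨅ x : L, pot k μ (x : X)

end Rendezvous

open Rendezvous

/-!
Up to mass `η`, a tight measure `μ` lives on a compact set `K`. Snapping every point to the
nearest point of a finite `δ`-net of `K` is a simple function `φ`; by uniform equicontinuity this
changes each potential by at most `ε / 4` on `K` and by at most `2 C` off `K`, so `μ` may be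
replaced by the finitely supported `μ.map φ`. Rounding its weights `w c` to frequencies `N c / M`
with `∑ |N c / M - w c|` small, and repeating each atom `c` exactly `N c` times, gives the points.
-/

section Discretization

variable {ι : Type*} [Fintype ι]

theorem exists_nat_approx_of_sum_eq_one {w : ι → ℝ} (hw0 : ∀ i, 0 ≤ w i) (hw1 : ∑ i, w i = 1)
    {η : ℝ} (hη : 0 < η) :
    ∃ N : ι → ℕ, 0 < ∑ i, N i ∧ ∑ i, |(N i : ℝ) / (∑ j, N j : ℕ) - w i| ≤ η := by
  set n : ℝ := (Fintype.card ι : ℝ)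
  obtain ⟨m, hm⟩ := exists_nat_gt (max n (2 * n / η))
  have hmn : n < m := (le_max_left _ _).trans_lt hm
  have hm0 : (0 : ℝ) < m := (Nat.cast_nonneg _).trans_lt hmn
  have hmη : 2 * n / m < η := by
    rw [div_lt_iff₀ hm0, mul_comm η]
    exact (div_lt_iff₀ hη).mp ((le_max_right _ _).trans_lt hm)
  set N : ι → ℕ := fun i => ⌊m * w i⌋₊
  have hN_le : ∀ i, (N i : ℝ) ≤ m * w i := fun i => Nat.floor_le (mul_nonneg hm0.le (hw0 i))
  have hN_ge : ∀ i, m * w i ≤ N i + 1 := fun i => (Nat.lt_floor_add_one _).le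
  set M : ℝ := ((∑ j, N j : ℕ) : ℝ)
  have hM : M = ∑ j, (N j : ℝ) := Nat.cast_sum _ _
  have hM_le : M ≤ m := by
    rw [hM, ← mul_one (m : ℝ), ← hw1, Finset.mul_sum]
    exact Finset.sum_le_sum fun i _ => hN_le i
  have hM_ge : m - n ≤ M := by
    have := Finset.sum_le_sum fun i (_ : i ∈ Finset.univ) => hN_ge i
    rw [← Finset.mul_sum, hw1, Finset.sum_add_distrib, ← hM] at this
    simpa [n] using this
  have hM0 : 0 < M := by linarith
  refine ⟨N, Nat.cast_pos.mp hM0, ?_⟩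
  have hterm : ∀ i, |(N i : ℝ) / M - w i| ≤ (N i / M - N i / m) + (w i - N i / m) := by
    intro i
    have h1 : (N i : ℝ) / m ≤ w i := by rw [div_le_iff₀ hm0]; linarith [hN_le i]
    have h2 : (N i : ℝ) / m ≤ N i / M := div_le_div_of_nonneg_left (Nat.cast_nonneg _) hM0 hM_le
    rw [abs_le]; constructor <;> linarith
  -- both brackets are nonnegative, and each sums to `1 - M / m`
  calc ∑ i, |(N i : ℝ) / M - w i|
      ≤ ∑ i, ((N i / M - N i / m) + (w i - N i / m)) := Finset.sum_le_sum fun i _ => hterm i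
    _ = 2 * (m - M) / m := by
      simp only [Finset.sum_add_distrib, Finset.sum_sub_distrib, ← Finset.sum_div, ← hM, hw1]
      field_simp
      ring
    _ ≤ 2 * n / m := by gcongr; linarith
    _ ≤ η := hmη.le

theorem exists_fin_sum_comp_eq_sum_mul (N : ι → ℕ) :
    ∃ z : Fin (∑ i, N i) → ι, ∀ g : ι → ℝ, ∑ j, g (z j) = ∑ i, (N i : ℝ) * g i := by
  let e : (Σ i, Fin (N i)) ≃ Fin (∑ i, N i) :=
    Fintype.equivFinOfCardEq (by simp [Fintype.card_sigma])
  refine ⟨fun j => (e.symm j).1, fun g => ?_⟩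
  rw [e.symm.sum_comp (fun p => g p.1), Fintype.sum_sigma]
  simp

end Discretization

section EmpiricalMeasure

variable {Y : Type*} [MeasurableSpace Y]

noncomputable def empiricalMeasure {m : ℕ} (z : Fin m → Y) : Measure Y :=
  (m : ℝ≥0∞)⁻¹ • ∑ j, Measure.dirac (z j)

theorem integral_empiricalMeasure [MeasurableSingletonClass Y] {m : ℕ} (z : Fin m → Y)
    (f : Y → ℝ) : ∫ y, f y ∂empiricalMeasure z = (m : ℝ)⁻¹ * ∑ j, f (z j) := by
  rw [empiricalMeasure, integral_smul_measure,
    integral_finsetSum_measure fun j _ => integrable_dirac enorm_lt_top]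
  simp [integral_dirac]

theorem integral_eq_sum_of_measure_compl_eq_zero [MeasurableSingletonClass Y] {ν : Measure Y}
    {s : Finset Y} (hs : ν (↑s)ᶜ = 0) {f : Y → ℝ} (hf : Integrable f ν) :
    ∫ y, f y ∂ν = ∑ c ∈ s, ν.real {c} * f c := by
  have hν : ν.restrict s = ν := Measure.restrict_eq_self_of_ae_mem (mem_ae_iff.mpr hs)
  calc ∫ y, f y ∂ν = ∫ y in s, f y ∂ν := by rw [hν]
    _ = ∑ c ∈ s, ν.real {c} * f c := setIntegral_finset s hf.integrableOn

theorem exists_empiricalMeasure_near_of_finite_support [MeasurableSingletonClass Y]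
    {ν : Measure Y} [IsProbabilityMeasure ν] {s : Finset Y} (hs : ν (↑s)ᶜ = 0)
    {η : ℝ} (hη : 0 < η) :
    ∃ m > 0, ∃ z : Fin m → Y, ∀ f : Y → ℝ, Measurable f → ∀ C : ℝ, (∀ y, |f y| ≤ C) →
      |∫ y, f y ∂empiricalMeasure z - ∫ y, f y ∂ν| ≤ C * η := by
  set w : s → ℝ := fun c => ν.real {(c : Y)}
  have hw1 : ∑ c, w c = 1 := by
    have := integral_eq_sum_of_measure_compl_eq_zero hs (integrable_const (1 : ℝ))
    rw [Finset.sum_coe_sort s (fun c => ν.real {c})]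
    simpa using this.symm
  obtain ⟨N, hN0, hN⟩ := exists_nat_approx_of_sum_eq_one (fun c => measureReal_nonneg) hw1 hη
  obtain ⟨z, hz⟩ := exists_fin_sum_comp_eq_sum_mul N
  refine ⟨_, hN0, fun j => z j, fun f hf C hC => ?_⟩
  have hC0 : 0 ≤ C := (abs_nonneg _).trans (hC (nonempty_of_isProbabilityMeasure ν).some)
  have hfν : Integrable f ν := .of_bound hf.aestronglyMeasurable C (ae_of_all _ hC)
  set M : ℝ := ((∑ c, N c : ℕ) : ℝ)
  calc |∫ y, f y ∂empiricalMeasure (fun j => (z j : Y)) - ∫ y, f y ∂ν|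
      = |∑ c, ((N c : ℝ) / M - w c) * f c| := by
        rw [integral_empiricalMeasure, hz (fun c => f c),
          integral_eq_sum_of_measure_compl_eq_zero hs hfν, ← Finset.sum_coe_sort s,
          Finset.mul_sum, ← Finset.sum_sub_distrib]
        congr 1
        refine Finset.sum_congr rfl fun c _ => ?_
        ring
    _ ≤ ∑ c, |(N c : ℝ) / M - w c| * C := by
        refine (Finset.abs_sum_le_sum_abs _ _).trans (Finset.sum_le_sum fun c _ => ?_)
        rw [abs_mul]
        exact mul_le_mul_of_nonneg_left (hC c) (abs_nonneg _)
    _ ≤ C * η := by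
        rw [← Finset.sum_mul, mul_comm]
        exact mul_le_mul_of_nonneg_left hN hC0

end EmpiricalMeasure

theorem abs_integral_sub_integral_le_of_abs_sub_le {X : Type*} [MeasurableSpace X]
    {μ : Measure X} [IsFiniteMeasure μ] {f g : X → ℝ} (hf : Integrable f μ)
    (hg : Integrable g μ) {K : Set X} (hK : MeasurableSet K) {a b : ℝ}
    (haK : ∀ x ∈ K, |g x - f x| ≤ a) (hb : ∀ x, |g x - f x| ≤ b) :
    |∫ x, g x ∂μ - ∫ x, f x ∂μ| ≤ a * μ.real K + b * μ.real Kᶜ := by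
  rw [← integral_sub hg hf, ← integral_add_compl (f := fun x => g x - f x) hK (hg.sub hf)]
  refine (abs_add_le _ _).trans (add_le_add ?_ ?_) <;> rw [← Real.norm_eq_abs] <;>
    refine norm_setIntegral_le_of_norm_le_const (measure_lt_top _ _) fun x hx => ?_
  exacts [haK x hx, hb x]

section Quantization

variable {Y : Type*} [MeasurableSpace Y]

theorem exists_simpleFunc_dist_lt_of_isCompact [PseudoMetricSpace Y] [OpensMeasurableSpace Y]
    [Nonempty Y] {K : Set Y} (hK : IsCompact K) {δ : ℝ} (hδ : 0 < δ) :
    ∃ φ : SimpleFunc Y Y, ∀ x ∈ K, dist (φ x) x < δ := by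
  obtain ⟨t, htK⟩ := hK.elim_finite_subcover (fun c : Y => Metric.ball c δ)
    (fun _ => Metric.isOpen_ball) fun y _ => Set.mem_iUnion.mpr ⟨y, Metric.mem_ball_self hδ⟩
  set e : ℕ → Y := fun k => t.toList.getD k (Classical.arbitrary Y)
  refine ⟨SimpleFunc.nearestPt e t.toList.length, fun x hx => ?_⟩
  obtain ⟨c, hct, hxc⟩ := Set.mem_iUnion₂.mp (htK hx)
  obtain ⟨k, hk, rfl⟩ := List.mem_iff_getElem.mp (Finset.mem_toList.mpr hct)
  have hek : e k = t.toList[k] := List.getD_eq_getElem _ _ hk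
  have := SimpleFunc.edist_nearestPt_le e x hk.le
  rw [hek, edist_dist, edist_dist, ENNReal.ofReal_le_ofReal_iff dist_nonneg] at this
  exact this.trans_lt (Metric.mem_ball'.mp hxc)

theorem exists_finite_support_near_of_innerRegular [MetricSpace Y] [OpensMeasurableSpace Y]
    (μ : Measure Y) [IsProbabilityMeasure μ] [μ.InnerRegular] {δ η : ℝ} (hδ : 0 < δ)
    (hη : 0 < η) :
    ∃ (ν : Measure Y) (s : Finset Y), IsProbabilityMeasure ν ∧ ν (↑s)ᶜ = 0 ∧
      ∀ f : Y → ℝ, Measurable f → ∀ C ε' : ℝ, (∀ y, |f y| ≤ C) →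
        (∀ y y', dist y y' < δ → |f y - f y'| ≤ ε') →
          |∫ y, f y ∂ν - ∫ y, f y ∂μ| ≤ ε' + 2 * C * η := by
  have : Nonempty Y := nonempty_of_isProbabilityMeasure μ
  obtain ⟨K, hKc, hKμ⟩ := isTightMeasureSet_iff_exists_isCompact_measure_compl_le.mp
    (isTightMeasureSet_singleton_of_innerRegular (μ := μ)) (ENNReal.ofReal η) (by simpa using hη)
  obtain ⟨φ, hφ⟩ := exists_simpleFunc_dist_lt_of_isCompact hKc hδ
  refine ⟨μ.map φ, φ.range, Measure.isProbabilityMeasure_map φ.measurable.aemeasurable, ?_,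
    fun f hf C ε' hC hfδ => ?_⟩
  · rw [Measure.map_apply φ.measurable (Finset.measurableSet _).compl]
    simp
  have hC0 : 0 ≤ C := (abs_nonneg _).trans (hC (Classical.arbitrary Y))
  have hε' : 0 ≤ ε' := by
    simpa using hfδ (Classical.arbitrary Y) (Classical.arbitrary Y) (by simpa using hδ)
  have hμK : μ.real Kᶜ ≤ η := ENNReal.toReal_le_of_le_ofReal hη.le (hKμ μ rfl)
  have hfμ : Integrable f μ := .of_bound hf.aestronglyMeasurable C (ae_of_all _ hC)
  have hfφμ : Integrable (f ∘ φ) μ :=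
    .of_bound (hf.comp φ.measurable).aestronglyMeasurable C (ae_of_all _ fun x => hC (φ x))
  rw [integral_map φ.measurable.aemeasurable hf.aestronglyMeasurable]
  calc |∫ x, f (φ x) ∂μ - ∫ x, f x ∂μ| ≤ ε' * μ.real K + 2 * C * μ.real Kᶜ :=
        abs_integral_sub_integral_le_of_abs_sub_le hfμ hfφμ hKc.isClosed.measurableSet
          (fun x hx => hfδ _ _ (hφ x hx))
          fun x => (abs_sub _ _).trans
            (by linarith [hC (φ x), hC x] : |f (φ x)| + |f x| ≤ 2 * C)
    _ ≤ ε' + 2 * C * η := by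
        gcongr
        exact mul_le_of_le_one_right hε' measureReal_le_one

end Quantization

/-- Let `(Y,d)` be a metric space with a positive, symmetric, bounded
kernel `k` such that `{k(·,y) : y ∈ Y}` is uniformly equicontinuous, `μ` a tight
Borel probability measure on `Y` and `ε > 0`. Then there are `m ∈ ℕ` and points
`x_1,…,x_m ∈ Y` such that the potential of `ν = (1/m) ∑ δ_{x_j}` approximates the
potential of `μ` within `ε` uniformly on `Y`. -/
theorem potential_approx_by_discrete {Y : Type*} [MetricSpace Y]
    [MeasurableSpace Y] [BorelSpace Y]
    (k : Y → Y → ℝ) (hpos : ∀ x y : Y, 0 < k x y) (hsymm : ∀ x y : Y, k x y = k y x)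
    (hbdd : ∃ C : ℝ, ∀ x y : Y, k x y ≤ C)
    (hequi : ∀ ε > (0 : ℝ), ∃ δ > (0 : ℝ), ∀ x x' y : Y,
      dist x x' < δ → |k x y - k x' y| < ε)
    (μ : Measure Y) (hμ : IsProbabilityMeasure μ) (hreg : μ.InnerRegular)
    (ε : ℝ) (hε : 0 < ε) :
    ∃ (m : ℕ) (_ : 0 < m) (z : Fin m → Y),
      ∀ x : Y,
        |(∫ y, k x y ∂((m : ℝ≥0∞)⁻¹ • ∑ j : Fin m, MeasureTheory.Measure.dirac (z j)))
            - ∫ y, k x y ∂μ| ≤ ε := by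
  have : Nonempty Y := nonempty_of_isProbabilityMeasure μ
  obtain ⟨C, hC⟩ := hbdd
  have hC0 : 0 < C := (hpos (Classical.arbitrary Y) (Classical.arbitrary Y)).trans_le (hC _ _)
  have hkC : ∀ x y, |k x y| ≤ C := fun x y => (abs_of_pos (hpos x y)).trans_le (hC x y)
  have hk_unif : ∀ x, UniformContinuous (k x) := fun x =>
    Metric.uniformContinuous_iff.mpr fun ε' hε' => by
      obtain ⟨δ', hδ', h⟩ := hequi ε' hε'
      refine ⟨δ', hδ', fun y y' hyy' => ?_⟩
      rw [Real.dist_eq, hsymm x, hsymm x]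
      exact h y y' x hyy'
  have hk_meas : ∀ x, Measurable (k x) := fun x => (hk_unif x).continuous.measurable
  obtain ⟨δ, hδ, hkδ⟩ := hequi (ε / 4) (by positivity)
  have hk_mod : ∀ x y y', dist y y' < δ → |k x y - k x y'| ≤ ε / 4 := fun x y y' h => by
    rw [hsymm x y, hsymm x y']
    exact (hkδ y y' x h).le
  obtain ⟨ν, s, hν, hs, hνμ⟩ :=
    exists_finite_support_near_of_innerRegular μ hδ (η := ε / (8 * C)) (by positivity)
  obtain ⟨m, hm, z, hzν⟩ :=
    exists_empiricalMeasure_near_of_finite_support hs (η := ε / (2 * C)) (by positivity)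
  refine ⟨m, hm, z, fun x => ?_⟩
  calc _ ≤ |∫ y, k x y ∂empiricalMeasure z - ∫ y, k x y ∂ν|
        + |∫ y, k x y ∂ν - ∫ y, k x y ∂μ| := abs_sub_le _ _ _
    _ ≤ C * (ε / (2 * C)) + (ε / 4 + 2 * C * (ε / (8 * C))) :=
        add_le_add (hzν _ (hk_meas x) C (hkC x)) (hνμ _ (hk_meas x) C _ (hkC x) (hk_mod x))
    _ = ε := by field_simp; ring
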